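/- For every n ≥ 1 and every collection of signs ε_{i,j} ∈ {+1,0,−1} (1 ≤ i < j ≤ n) and ε_i ∈ {+1,0,−1} (1 ≤ i ≤ n) in which at least one entry is 0, the following are equivalent: (a) there exists P ∈ ℝ^n with sgn(A_{i,j}(P)) = ε_{i,j} for all i < j and sgn(B_i(P)) = ε_i for all i; (b) there exists Q ∈ ℝ^n with sgn(A_{i,j}(Q)) = ε_{i,j} for all i < j and sgn(B̃_i(Q)) = ε_i for all i. Equivalently, matching sign vectors defines a bijection between the faces of codimension at least one of 𝓗_{ℝ^n} and those of 𝓗_{W_n}. -/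
import Mathlib


noncomputable section

/-- The linear form `A_{i,j}(y) = y_i - y_j` on `ℝ^n`. -/
def Aform (n : ℕ) (i j : Fin n) (y : Fin n → ℝ) : ℝ := y i - y j

/-- The linear form `B_i(y) = 2 y_i + ∑_{j ≠ i} y_j` on `ℝ^n`. -/
def Bform (n : ℕ) (i : Fin n) (y : Fin n → ℝ) : ℝ := 2 * y i + ∑ k ∈ Finset.univ.erase i, y k

/-- The linear form `B̃_i(y) = y_1 + B_i(y)` on `ℝ^n`. -/
def Btform (n : ℕ) (hn : 0 < n) (i : Fin n) (y : Fin n → ℝ) : ℝ := y ⟨0, hn⟩ + Bform n i y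

lemma Bform_shift (n : ℕ) (i : Fin n) (y : Fin n → ℝ) (c : ℝ) :
    Bform n i (fun k => y k + c) = Bform n i y + (n + 1) * c := by
  have hcard : (Finset.univ.erase i).card = n - 1 := by
    rw [Finset.card_erase_of_mem (Finset.mem_univ i), Finset.card_univ, Fintype.card_fin]
  have h1 : 1 ≤ n := i.pos
  have hcast : ((n - 1 : ℕ) : ℝ) = (n : ℝ) - 1 := by
    rw [Nat.cast_sub h1, Nat.cast_one]
  unfold Bform
  rw [Finset.sum_add_distrib, Finset.sum_const, hcard, nsmul_eq_mul, hcast]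
  ring

/-- For `n ≥ 1` and signs `ε_{i,j}, ε_i ∈ {+1,0,-1}` with at least one
entry equal to `0`, a sign vector is realized by some `P ∈ ℝ^n` for the forms
`(A_{i,j}; B_i)` iff it is realized by some `Q ∈ ℝ^n` for the forms `(A_{i,j}; B̃_i)`;
i.e. matching sign vectors is a bijection between the faces of codimension at least one
of `𝓗_{ℝ^n}` and those of `𝓗_{W_n}`. -/
theorem statement2 (n : ℕ) (hn : 0 < n)
    (εA : Fin n → Fin n → SignType) (εB : Fin n → SignType)
    (hzero : (∃ i j : Fin n, i < j ∧ εA i j = 0) ∨ (∃ i : Fin n, εB i = 0)) :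
    ((∃ P : Fin n → ℝ,
        (∀ i j : Fin n, i < j → SignType.sign (Aform n i j P) = εA i j) ∧
        (∀ i : Fin n, SignType.sign (Bform n i P) = εB i)) ↔
      (∃ Q : Fin n → ℝ,
        (∀ i j : Fin n, i < j → SignType.sign (Aform n i j Q) = εA i j) ∧
        (∀ i : Fin n, SignType.sign (Btform n hn i Q) = εB i))) := by
  constructor
  · rintro ⟨P, hA, hB⟩
    set c : ℝ := -(P ⟨0, hn⟩) / (n + 2) with hc
    refine ⟨fun k => P k + c, ?_, ?_⟩
    · intro i j hij
      have : Aform n i j (fun k => P k + c) = Aform n i j P := by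
        unfold Aform; ring
      rw [this]; exact hA i j hij
    · intro i
      have hne : (n : ℝ) + 2 ≠ 0 := by positivity
      have : Btform n hn i (fun k => P k + c) = Bform n i P := by
        unfold Btform
        rw [Bform_shift]
        show P ⟨0, hn⟩ + c + (Bform n i P + ((n : ℝ) + 1) * c) = Bform n i P
        have h0 : P ⟨0, hn⟩ + ((n : ℝ) + 2) * c = 0 := by
          rw [hc]; field_simp; try ring
        linarith
      rw [this]; exact hB i
  · rintro ⟨Q, hA, hB⟩
    set c : ℝ := Q ⟨0, hn⟩ / (n + 1) with hc
    refine ⟨fun k => Q k + c, ?_, ?_⟩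
    · intro i j hij
      have : Aform n i j (fun k => Q k + c) = Aform n i j Q := by
        unfold Aform; ring
      rw [this]; exact hA i j hij
    · intro i
      have hne : (n : ℝ) + 1 ≠ 0 := by positivity
      have : Bform n i (fun k => Q k + c) = Btform n hn i Q := by
        rw [Bform_shift]
        unfold Btform
        have h0 : ((n : ℝ) + 1) * c = Q ⟨0, hn⟩ := by
          rw [hc]; field_simp; try ring
        linarith
      rw [this]; exact hB i

end
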